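/- arXiv:1301.6236 — 6 statements merged into one kernel-verified Lean document; each statement's English description precedes it below -/
import Mathlib

section
/- The F_q[X]-module M_{s,ℓ} of all bivariate polynomials Q(X,Y) of Y-degree at most ℓ passing through the n points (α_i, r_i') with multiplicity at least s is generated by the ℓ+1 polynomials P^(t)(X,Y) = G(X)^{s−t}(Y − R(X))^t for 0 ≤ t < s, and P^(t)(X,Y) = Y^{t−s}(Y − R(X))^s for s ≤ t ≤ ℓ. -/
/-! Shifting a point to the origin is a ring homomorphism, so multiplicities add under
products and every generator lies in `M_{s,ℓ}`. Conversely, if `Q ∈ M_{s,ℓ}` has `Y`-degree at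
most `d`, its coefficient of `Y^d` is divisible by `(X - αᵢ)^(s-d)` for every `i`, hence by
`G^(s-d)`, which is the coefficient of `Y^d` in the `d`-th generator; subtracting a multiple of
that generator lowers the `Y`-degree, and induction on it finishes the proof. -/

open Polynomial

/-- The shifted polynomial Q(X+a, Y+b), where `Q : F[X][Y]` (outer variable `Y`,
inner variable `X`). -/
noncomputable def shiftXY {F : Type*} [Field F] (Q : Polynomial (Polynomial F)) (a b : F) :
    Polynomial (Polynomial F) :=
  (Q.map ((aeval (X + C a : Polynomial F)).toRingHom : Polynomial F →+* Polynomial F)).comp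
    (X + C (C b))

/-- `Q` vanishes with multiplicity at least `s` at the point `(a, b)`:
`Q(X+a, Y+b)` has no monomial `X^i Y^j` with `i + j < s`. -/
def HasMultAt {F : Type*} [Field F] (Q : Polynomial (Polynomial F)) (a b : F) (s : ℕ) : Prop :=
  ∀ i j : ℕ, i + j < s → ((shiftXY Q a b).coeff j).coeff i = 0

/-- The set (an `F[X]`-module) of bivariate polynomials of `Y`-degree at most `ℓ`
vanishing with multiplicity at least `s` at each point `(α i, r' i)`. -/
def InterpSet {F : Type*} [Field F] {n : ℕ} (α r' : Fin n → F) (s ℓ : ℕ) :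
    Set (Polynomial (Polynomial F)) :=
  {Q | Q.natDegree ≤ ℓ ∧ ∀ i, HasMultAt Q (α i) (r' i) s}

/-- The family `b` is a basis of the `F[X]`-module `M_{s,ℓ} = InterpSet α r' s ℓ`:
it is linearly independent over `F[X]` and its `F[X]`-span is exactly `M_{s,ℓ}`. -/
def IsBasisOfInterp {F : Type*} [Field F] {n : ℕ} (α r' : Fin n → F) (s ℓ : ℕ)
    {ι : Type*} (b : ι → Polynomial (Polynomial F)) : Prop :=
  LinearIndependent (Polynomial F) b ∧
    (Submodule.span (Polynomial F) (Set.range b) : Set (Polynomial (Polynomial F))) =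
      InterpSet α r' s ℓ

section Bivariate

variable {R : Type*} [Semiring R]

/-- All monomials `X^i Y^j` of total degree `i + j < s` vanish. -/
def OrderAtLeast (Q : R[X][X]) (s : ℕ) : Prop :=
  ∀ i j : ℕ, i + j < s → (Q.coeff j).coeff i = 0

theorem orderAtLeast_zero_right (Q : R[X][X]) : OrderAtLeast Q 0 := fun _ _ h =>
  absurd h (Nat.not_lt_zero _)

theorem OrderAtLeast.mul {A B : R[X][X]} {s t : ℕ} (hA : OrderAtLeast A s)
    (hB : OrderAtLeast B t) : OrderAtLeast (A * B) (s + t) := by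
  intro i j hij
  rw [coeff_mul, finsetSum_coeff]
  refine Finset.sum_eq_zero fun x hx => ?_
  rw [Finset.HasAntidiagonal.mem_antidiagonal] at hx
  rw [coeff_mul]
  refine Finset.sum_eq_zero fun y hy => ?_
  rw [Finset.HasAntidiagonal.mem_antidiagonal] at hy
  rcases lt_or_ge (y.1 + x.1) s with h | h
  · rw [hA y.1 x.1 h, zero_mul]
  · rw [hB y.2 x.2 (by omega), mul_zero]

theorem OrderAtLeast.pow {A : R[X][X]} {s : ℕ} (hA : OrderAtLeast A s) (t : ℕ) :
    OrderAtLeast (A ^ t) (t * s) := by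
  induction t with
  | zero => simpa only [zero_mul] using orderAtLeast_zero_right (A ^ 0)
  | succ t ih => simpa only [pow_succ, Nat.succ_mul] using ih.mul hA

theorem orderAtLeast_C_of_X_pow_dvd {q : R[X]} {m : ℕ} (h : X ^ m ∣ q) :
    OrderAtLeast (C q : R[X][X]) m := by
  intro i j hij
  rw [coeff_C]
  split_ifs with hj
  · exact X_pow_dvd_iff.mp h i (by omega)
  · rfl

end Bivariate

theorem X_pow_dvd_taylor_iff {R : Type*} [CommRing R] {p : R[X]} {a : R} {m : ℕ} :
    X ^ m ∣ taylor a p ↔ (X - C a) ^ m ∣ p := by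
  conv_rhs => rw [← map_dvd_iff (taylorEquiv a), map_pow, map_sub]
  change _ ↔ (taylor a X - taylor a (C a)) ^ m ∣ taylor a p
  rw [taylor_X, taylor_C, add_sub_cancel_right]

theorem coeff_taylor_of_natDegree_le {R : Type*} [CommRing R] (a : R) {p : R[X]} {d : ℕ}
    (h : p.natDegree ≤ d) : (taylor a p).coeff d = p.coeff d := by
  rcases h.lt_or_eq with h | rfl
  · rw [coeff_eq_zero_of_natDegree_lt h,
      coeff_eq_zero_of_natDegree_lt (by rwa [natDegree_taylor])]
  · exact coeff_taylor_natDegree a p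

section Multiplicity

variable {F : Type*} [Field F]

theorem shiftXY_eq_taylor (Q : F[X][X]) (a b : F) :
    shiftXY Q a b = taylor (C b) (Q.map (taylorAlgHom a : F[X] →+* F[X])) := by
  rw [shiftXY, taylor_apply]
  congr 2

noncomputable def shiftXYHom (a b : F) : F[X][X] →+* F[X][X] :=
  (taylorAlgHom (C b) : F[X][X] →+* F[X][X]).comp (mapRingHom (taylorAlgHom a : F[X] →+* F[X]))

theorem shiftXY_eq_shiftXYHom (Q : F[X][X]) (a b : F) : shiftXY Q a b = shiftXYHom a b Q := by
  simp [shiftXY_eq_taylor, shiftXYHom]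

theorem hasMultAt_iff_orderAtLeast {Q : F[X][X]} {a b : F} {s : ℕ} :
    HasMultAt Q a b s ↔ OrderAtLeast (shiftXYHom a b Q) s := by
  rw [← shiftXY_eq_shiftXYHom]
  rfl

theorem hasMultAt_zero_right (Q : F[X][X]) (a b : F) : HasMultAt Q a b 0 :=
  hasMultAt_iff_orderAtLeast.mpr (orderAtLeast_zero_right _)

theorem HasMultAt.mul {A B : F[X][X]} {a b : F} {s t : ℕ} (hA : HasMultAt A a b s)
    (hB : HasMultAt B a b t) : HasMultAt (A * B) a b (s + t) := by
  rw [hasMultAt_iff_orderAtLeast] at *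
  rw [map_mul]
  exact hA.mul hB

theorem HasMultAt.pow {A : F[X][X]} {a b : F} {s : ℕ} (hA : HasMultAt A a b s) (t : ℕ) :
    HasMultAt (A ^ t) a b (t * s) := by
  rw [hasMultAt_iff_orderAtLeast] at *
  rw [map_pow]
  exact hA.pow t

theorem HasMultAt.add {A B : F[X][X]} {a b : F} {s : ℕ} (hA : HasMultAt A a b s)
    (hB : HasMultAt B a b s) : HasMultAt (A + B) a b s := by
  rw [hasMultAt_iff_orderAtLeast] at *
  intro i j h
  rw [map_add, coeff_add, coeff_add, hA i j h, hB i j h, add_zero]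

theorem hasMultAt_C_of_dvd {p : F[X]} {a : F} (b : F) {m : ℕ} (h : (X - C a) ^ m ∣ p) :
    HasMultAt (C p) a b m := by
  rw [← X_pow_dvd_taylor_iff] at h
  rw [hasMultAt_iff_orderAtLeast, ← shiftXY_eq_shiftXYHom, shiftXY_eq_taylor]
  simpa using orderAtLeast_C_of_X_pow_dvd h

theorem hasMultAt_X_sub_C {p : F[X]} {a b : F} (h : p.eval a = b) :
    HasMultAt (X - C p) a b 1 := by
  intro i j hij
  obtain ⟨rfl, rfl⟩ : i = 0 ∧ j = 0 := by omega
  simp [shiftXY_eq_taylor, taylor_coeff_zero, h]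

theorem shiftXY_coeff_of_natDegree_le (Q : F[X][X]) (a b : F) {d : ℕ} (h : Q.natDegree ≤ d) :
    (shiftXY Q a b).coeff d = taylor a (Q.coeff d) := by
  rw [shiftXY_eq_taylor, coeff_taylor_of_natDegree_le _ (natDegree_map_le.trans h), coeff_map]
  rfl

/-- The top coefficient of `Q` only sees the monomials `X^i Y^d` of the shifted polynomial. -/
theorem HasMultAt.X_sub_C_pow_dvd_coeff {Q : F[X][X]} {a b : F} {s d : ℕ}
    (h : HasMultAt Q a b s) (hd : Q.natDegree ≤ d) : (X - C a) ^ (s - d) ∣ Q.coeff d := by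
  rw [← X_pow_dvd_taylor_iff, X_pow_dvd_iff]
  intro k hk
  rw [← shiftXY_coeff_of_natDegree_le Q a b hd]
  exact h k d (by omega)

end Multiplicity

theorem mem_span_of_triangular {A : Type*} [CommRing A] (N : Submodule A A[X]) (g : ℕ → A[X])
    (ℓ : ℕ) (hg_deg : ∀ t, (g t).natDegree ≤ t) (hg_mem : ∀ t ≤ ℓ, g t ∈ N)
    (hdvd : ∀ Q ∈ N, ∀ d, Q.natDegree ≤ d → (g d).coeff d ∣ Q.coeff d)
    {Q : A[X]} (hQ : Q ∈ N) (hQℓ : Q.natDegree ≤ ℓ) :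
    Q ∈ Submodule.span A (Set.range fun t : Fin (ℓ + 1) => g t) := by
  suffices key : ∀ d ≤ ℓ + 1, ∀ Q ∈ N, Q.degree < d →
      Q ∈ Submodule.span A (Set.range fun t : Fin (ℓ + 1) => g t) from
    key (ℓ + 1) le_rfl Q hQ (degree_lt_iff_coeff_zero _ _ |>.mpr fun m hm =>
      coeff_eq_zero_of_natDegree_lt (by omega))
  intro d
  induction d with
  | zero =>
    intro _ Q _ hQ
    rw [show Q = 0 by simpa using hQ]
    exact zero_mem _
  | succ d ih =>
    intro hd Q hQ hQd
    rw [degree_lt_iff_coeff_zero] at hQd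
    obtain ⟨c, hc⟩ := hdvd Q hQ d (natDegree_le_iff_coeff_eq_zero.mpr fun m hm => hQd m hm)
    have hgd : g d ∈ Submodule.span A (Set.range fun t : Fin (ℓ + 1) => g t) :=
      Submodule.subset_span ⟨⟨d, by omega⟩, rfl⟩
    have hlow : (Q - c • g d).degree < d := by
      rw [degree_lt_iff_coeff_zero]
      intro m hm
      rcases hm.eq_or_lt with rfl | hm
      · rw [coeff_sub, coeff_smul, hc, smul_eq_mul, mul_comm, sub_self]
      · rw [coeff_sub, coeff_smul, hQd m hm,
          coeff_eq_zero_of_natDegree_lt ((hg_deg d).trans_lt hm), smul_zero, sub_zero]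
    have := ih (by omega) _ (N.sub_mem hQ (N.smul_mem c (hg_mem d (by omega)))) hlow
    simpa using add_mem this (Submodule.smul_mem _ c hgd)

section Interpolation

variable {F : Type*} [Field F]

noncomputable def interpSubmodule {n : ℕ} (α r' : Fin n → F) (s ℓ : ℕ) :
    Submodule F[X] F[X][X] where
  carrier := InterpSet α r' s ℓ
  add_mem' hA hB :=
    ⟨(natDegree_add_le _ _).trans (max_le hA.1 hB.1), fun i => (hA.2 i).add (hB.2 i)⟩
  zero_mem' := ⟨by simp, fun i j k _ => by simp [shiftXY_eq_shiftXYHom]⟩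
  smul_mem' c Q hQ := by
    rw [smul_eq_C_mul]
    exact ⟨natDegree_C_mul_le _ _ |>.trans hQ.1,
      fun i => by simpa using (hasMultAt_zero_right (C c) _ _).mul (hQ.2 i)⟩

theorem mem_interpSubmodule {n : ℕ} {α r' : Fin n → F} {s ℓ : ℕ} {Q : F[X][X]} :
    Q ∈ interpSubmodule α r' s ℓ ↔ Q ∈ InterpSet α r' s ℓ := Iff.rfl

/-- The generators `P^(t)`; both cases have leading coefficient `G^(s-t)`, since `s - t = 0`
in `ℕ` for `t ≥ s`. -/
noncomputable def interpGen (G R : F[X]) (s t : ℕ) : F[X][X] :=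
  if t < s then C (G ^ (s - t)) * (X - C R) ^ t else X ^ (t - s) * (X - C R) ^ s

theorem natDegree_X_pow_sub_mul_X_sub_C_pow (R : F[X]) {s t : ℕ} (h : s ≤ t) :
    ((X : F[X][X]) ^ (t - s) * (X - C R) ^ s).natDegree = t := by
  rw [(monic_X_pow _).natDegree_mul ((monic_X_sub_C R).pow s), natDegree_X_pow,
    (monic_X_sub_C R).natDegree_pow, natDegree_X_sub_C]
  omega

theorem natDegree_interpGen_le (G R : F[X]) (s t : ℕ) : (interpGen G R s t).natDegree ≤ t := by
  unfold interpGen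
  split_ifs with hts
  · exact natDegree_C_mul_le _ _ |>.trans (by simp [(monic_X_sub_C R).natDegree_pow])
  · exact (natDegree_X_pow_sub_mul_X_sub_C_pow R (not_lt.mp hts)).le

theorem coeff_interpGen_self (G R : F[X]) (s t : ℕ) :
    (interpGen G R s t).coeff t = G ^ (s - t) := by
  have hY := monic_X_sub_C R
  unfold interpGen
  split_ifs with hts
  · have hlead : ((X - C R) ^ t).coeff t = 1 := by
      simpa only [hY.natDegree_pow, natDegree_X_sub_C, mul_one] using (hY.pow t).coeff_natDegree
    rw [coeff_C_mul, hlead, mul_one]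
  · rw [Nat.sub_eq_zero_of_le (not_lt.mp hts), pow_zero]
    have hlead := ((monic_X_pow (R := F[X]) (t - s)).mul (hY.pow s)).coeff_natDegree
    rwa [natDegree_X_pow_sub_mul_X_sub_C_pow R (not_lt.mp hts)] at hlead

theorem hasMultAt_interpGen {G R : F[X]} {a b : F} (hG : X - C a ∣ G) (hR : R.eval a = b)
    (s t : ℕ) : HasMultAt (interpGen G R s t) a b s := by
  have hY := (hasMultAt_X_sub_C hR).pow
  unfold interpGen
  split_ifs with hts
  · simpa [hts.le] using (hasMultAt_C_of_dvd b (pow_dvd_pow_of_dvd hG (s - t))).mul (hY t)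
  · simpa using (hasMultAt_zero_right (X ^ (t - s)) a b).mul (hY s)

theorem prod_X_sub_C_pow_dvd_coeff {n : ℕ} {α : Fin n → F} (hα : Function.Injective α)
    {r' : Fin n → F} {Q : F[X][X]} {s d : ℕ} (hQ : ∀ i, HasMultAt Q (α i) (r' i) s)
    (hd : Q.natDegree ≤ d) : (∏ i, (X - C (α i))) ^ (s - d) ∣ Q.coeff d := by
  rw [← Finset.prod_pow]
  exact Fintype.prod_dvd_of_coprime (fun i j hij => ((pairwise_coprime_X_sub_C hα) hij).pow)
    fun i => (hQ i).X_sub_C_pow_dvd_coeff hd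

end Interpolation

theorem statement2_general {F : Type*} [Field F] {n : ℕ}
    (α : Fin n → F) (hα : Function.Injective α) (r' : Fin n → F)
    (s ℓ : ℕ)
    (R : Polynomial F) (hR : ∀ i, R.eval (α i) = r' i) :
    InterpSet α r' s ℓ =
      (Submodule.span (Polynomial F)
        (Set.range (fun t : Fin (ℓ + 1) =>
          if (t : ℕ) < s then
            C ((∏ i, (X - C (α i))) ^ (s - (t : ℕ))) * (X - C R) ^ (t : ℕ)
          else
            X ^ ((t : ℕ) - s) * (X - C R) ^ s)) :
        Set (Polynomial (Polynomial F))) := by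
  set G : F[X] := ∏ i, (X - C (α i))
  change (interpSubmodule α r' s ℓ : Set F[X][X]) =
    Submodule.span F[X] (Set.range fun t : Fin (ℓ + 1) => interpGen G R s t)
  have hgen : ∀ t ≤ ℓ, interpGen G R s t ∈ interpSubmodule α r' s ℓ := fun t ht =>
    mem_interpSubmodule.mpr ⟨(natDegree_interpGen_le G R s t).trans ht, fun i =>
      hasMultAt_interpGen (Finset.dvd_prod_of_mem (fun i => X - C (α i)) (Finset.mem_univ i))
        (hR i) s t⟩
  apply Set.Subset.antisymm
  · intro Q hQ
    refine mem_span_of_triangular (interpSubmodule α r' s ℓ) (interpGen G R s) ℓ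
      (natDegree_interpGen_le G R s) hgen (fun P hP d hd => ?_) hQ hQ.1
    rw [coeff_interpGen_self]
    exact prod_X_sub_C_pow_dvd_coeff hα hP.2 hd
  · refine SetLike.coe_subset_coe.mpr (Submodule.span_le.mpr ?_)
    rintro _ ⟨t, rfl⟩
    exact hgen t (Nat.lt_succ_iff.mp t.2)

/-- The module M_{s,ℓ} is generated over F[X] by the ℓ+1 polynomials
P^(t) = G^{s−t}(Y − R)^t for 0 ≤ t < s and P^(t) = Y^{t−s}(Y − R)^s for s ≤ t ≤ ℓ. -/
theorem statement2 {F : Type*} [Field F] [Fintype F] {n : ℕ}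
    (α : Fin n → F) (hα : Function.Injective α) (r' : Fin n → F)
    (s ℓ : ℕ) (hs : 1 ≤ s) (hsℓ : s ≤ ℓ)
    (R : Polynomial F) (hRdeg : R.natDegree < n) (hR : ∀ i, R.eval (α i) = r' i) :
    InterpSet α r' s ℓ =
      (Submodule.span (Polynomial F)
        (Set.range (fun t : Fin (ℓ + 1) =>
          if (t : ℕ) < s then
            C ((∏ i, (X - C (α i))) ^ (s - (t : ℕ))) * (X - C R) ^ (t : ℕ)
          else
            X ^ ((t : ℕ) - s) * (X - C R) ^ s)) :
        Set (Polynomial (Polynomial F))) :=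
  statement2_general α hα r' s ℓ R hR
end

section
/- If a nonsingular square matrix V over F_q[X] is in weak Popov form, then its orthogonality defect is zero, i.e., the sum of the degrees of its rows equals the degree of its determinant. -/
open Polynomial

open scoped Classical

/-- The degree of a vector over `F[X]`: the maximum of the degrees of its entries
(`⊥` for the zero vector). -/
noncomputable def vecDeg {F : Type*} [Field F] {m : ℕ} (v : Fin m → Polynomial F) : WithBot ℕ :=
  Finset.univ.sup fun j => (v j).degree

/-- The leading position of a vector over `F[X]`: the largest index attaining the
vector's degree. -/
noncomputable def leadPos {F : Type*} [Field F] {m : ℕ} (v : Fin m → Polynomial F) : ℕ :=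
  (Finset.univ.filter fun j : Fin m => (v j).degree = vecDeg v).sup fun j => (j : ℕ)

/-- A square matrix over `F[X]` is in weak Popov form if the leading positions of
its rows are pairwise distinct. -/
noncomputable def WeakPopov {F : Type*} [Field F] {m : ℕ}
    (V : Matrix (Fin m) (Fin m) (Polynomial F)) : Prop :=
  Function.Injective fun i => leadPos (V i)

/-- The degree of a matrix over `F[X]`: the sum of its row degrees (in `WithBot ℕ`). -/
noncomputable def matDeg {F : Type*} [Field F] {m : ℕ}
    (V : Matrix (Fin m) (Fin m) (Polynomial F)) : WithBot ℕ :=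
  ∑ i, vecDeg (V i)

/-- The degree of a vector over `F[X]`, as a natural number (via `natDegree`). -/
def vecDegNat {F : Type*} [Field F] {m : ℕ} (v : Fin m → Polynomial F) : ℕ :=
  Finset.univ.sup fun j => (v j).natDegree

/-- The degree of a matrix over `F[X]` as a natural number: the sum of its row degrees. -/
def matDegNat {F : Type*} [Field F] {m : ℕ}
    (V : Matrix (Fin m) (Fin m) (Polynomial F)) : ℕ :=
  ∑ i, vecDegNat (V i)

/-- The diagonal weight matrix W_ℓ = diag(1, X^{k−1}, …, X^{ℓ(k−1)}). -/
noncomputable def Wmat (F : Type*) [Field F] (k ℓ : ℕ) :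
    Matrix (Fin (ℓ + 1)) (Fin (ℓ + 1)) (Polynomial F) :=
  Matrix.diagonal fun i => X ^ ((i : ℕ) * (k - 1))

/-! With `dᵢ` the degree of row `i`, every term of the Leibniz expansion of `det V` has degree
at most `∑ dᵢ`, and the coefficient of `X ^ ∑ dᵢ` in `det V` is the determinant of the leading
coefficient matrix `L = (coeff (V i j) dᵢ)`. Row `i` of `L` is nonzero at the leading position
of row `i` of `V` and vanishes to its right; in weak Popov form these positions form a
permutation of the columns, so `L` is lower triangular up to a row permutation, with nonzero
diagonal. Hence `det L ≠ 0` and `deg det V = ∑ dᵢ`. -/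

namespace Polynomial

theorem coeff_prod_sum_of_natDegree_le {R ι : Type*} [CommSemiring R] (s : Finset ι)
    (f : ι → R[X]) (d : ι → ℕ) (h : ∀ i ∈ s, (f i).natDegree ≤ d i) :
    (∏ i ∈ s, f i).coeff (∑ i ∈ s, d i) = ∏ i ∈ s, (f i).coeff (d i) := by
  induction s using Finset.cons_induction with
  | empty => simp
  | cons a s _ ih =>
    rw [Finset.prod_cons, Finset.sum_cons, Finset.prod_cons,
      ← ih fun i hi => h i (Finset.mem_cons_of_mem hi)]
    exact coeff_mul_add_eq_of_natDegree_le (h a (Finset.mem_cons_self a s))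
      ((natDegree_prod_le s f).trans
        (Finset.sum_le_sum fun i hi => h i (Finset.mem_cons_of_mem hi)))

end Polynomial

namespace Matrix

variable {R ι : Type*} [CommRing R] [Fintype ι] [DecidableEq ι]

theorem natDegree_det_le_sum_of_natDegree_le (V : Matrix ι ι R[X]) (d : ι → ℕ)
    (h : ∀ i j, (V i j).natDegree ≤ d i) : V.det.natDegree ≤ ∑ i, d i := by
  rw [det_apply']
  refine natDegree_sum_le_of_forall_le _ _ fun σ _ => ?_
  calc (↑↑(Equiv.Perm.sign σ) * ∏ i, V (σ i) i).natDegree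
      ≤ (∏ i, V (σ i) i).natDegree := by
        refine natDegree_mul_le.trans ?_
        simp
    _ ≤ ∑ i, (V (σ i) i).natDegree := natDegree_prod_le _ _
    _ ≤ ∑ i, d (σ i) := Finset.sum_le_sum fun i _ => h (σ i) i
    _ = ∑ i, d i := Equiv.sum_comp σ d

theorem coeff_det_sum_of_natDegree_le (V : Matrix ι ι R[X]) (d : ι → ℕ)
    (h : ∀ i j, (V i j).natDegree ≤ d i) :
    V.det.coeff (∑ i, d i) = (of fun i j => (V i j).coeff (d i)).det := by
  rw [det_apply', det_apply', finsetSum_coeff]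
  refine Finset.sum_congr rfl fun σ _ => ?_
  rw [← C_eq_intCast, coeff_C_mul, ← Equiv.sum_comp σ d,
    coeff_prod_sum_of_natDegree_le _ _ _ fun i _ => h (σ i) i]
  rfl

theorem degree_det_eq_sum_of_natDegree_le (V : Matrix ι ι R[X]) (d : ι → ℕ)
    (h : ∀ i j, (V i j).natDegree ≤ d i) (hL : (of fun i j => (V i j).coeff (d i)).det ≠ 0) :
    V.det.degree = ↑(∑ i, d i) :=
  degree_eq_of_le_of_coeff_ne_zero
    (degree_le_natDegree.trans (Nat.cast_le.mpr (natDegree_det_le_sum_of_natDegree_le V d h)))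
    (coeff_det_sum_of_natDegree_le V d h ▸ hL)

theorem det_ne_zero_of_pivots [LinearOrder ι] [Nontrivial R] [NoZeroDivisors R]
    (L : Matrix ι ι R) (p : ι → ι) (hp : Function.Injective p) (hpiv : ∀ i, L i (p i) ≠ 0)
    (hzero : ∀ i j, p i < j → L i j = 0) : L.det ≠ 0 := by
  let σ := Equiv.ofBijective p (Finite.injective_iff_bijective.mp hp)
  have hpσ : ∀ i, p (σ.symm i) = i := σ.apply_symm_apply
  have htri : (L.submatrix σ.symm id).IsLowerTriangular := fun i j hij =>
    hzero (σ.symm i) j (by rw [hpσ]; exact hij)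
  have hdiag : ∀ i, L.submatrix σ.symm id i i ≠ 0 := fun i => by
    simpa only [submatrix_apply, id, hpσ] using hpiv (σ.symm i)
  have hsub : (L.submatrix σ.symm id).det ≠ 0 := by
    rw [det_of_isLowerTriangular _ htri]
    exact Finset.prod_ne_zero_iff.mpr fun i _ => hdiag i
  rw [det_permute] at hsub
  exact right_ne_zero_of_mul hsub

end Matrix

section WeakPopov

variable {F : Type*} [Field F] {m : ℕ}

theorem natDegree_le_vecDegNat (v : Fin m → F[X]) (j : Fin m) :
    (v j).natDegree ≤ vecDegNat v :=
  Finset.le_sup (f := fun j => (v j).natDegree) (Finset.mem_univ j)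

theorem degree_le_vecDeg (v : Fin m → F[X]) (j : Fin m) : (v j).degree ≤ vecDeg v :=
  Finset.le_sup (f := fun j => (v j).degree) (Finset.mem_univ j)

theorem vecDeg_eq_vecDegNat {v : Fin m → F[X]} (hv : v ≠ 0) : vecDeg v = vecDegNat v := by
  refine le_antisymm (Finset.sup_le fun j _ =>
    degree_le_natDegree.trans (Nat.cast_le.mpr (natDegree_le_vecDegNat v j))) ?_
  obtain ⟨j₀, hj₀⟩ := Function.ne_iff.mp hv
  obtain ⟨j, -, hj⟩ := Finset.exists_mem_eq_sup Finset.univ ⟨j₀, Finset.mem_univ _⟩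
    fun j => (v j).natDegree
  rw [vecDegNat, hj]
  by_cases hz : v j = 0
  · simpa [hz] using (zero_le_degree_iff.mpr hj₀).trans (degree_le_vecDeg v j₀)
  · exact degree_eq_natDegree hz ▸ degree_le_vecDeg v j

theorem coeff_vecDegNat_ne_zero_iff {v : Fin m → F[X]} (hv : v ≠ 0) (j : Fin m) :
    (v j).coeff (vecDegNat v) ≠ 0 ↔ (v j).degree = vecDeg v := by
  rw [vecDeg_eq_vecDegNat hv]
  exact ⟨degree_eq_of_le_of_coeff_ne_zero
    (degree_le_natDegree.trans (Nat.cast_le.mpr (natDegree_le_vecDegNat v j))),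
    coeff_ne_zero_of_eq_degree⟩

theorem le_leadPos {v : Fin m → F[X]} {j : Fin m} (h : (v j).degree = vecDeg v) :
    (j : ℕ) ≤ leadPos v :=
  Finset.le_sup (f := fun j : Fin m => (j : ℕ)) (Finset.mem_filter.mpr ⟨Finset.mem_univ j, h⟩)

theorem exists_degree_eq_vecDeg_leadPos [Nonempty (Fin m)] (v : Fin m → F[X]) :
    ∃ j : Fin m, (v j).degree = vecDeg v ∧ (j : ℕ) = leadPos v := by
  obtain ⟨j₀, -, hj₀⟩ := Finset.exists_mem_eq_sup Finset.univ Finset.univ_nonempty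
    fun j => (v j).degree
  have hj₀' : j₀ ∈ Finset.univ.filter fun j => (v j).degree = vecDeg v :=
    Finset.mem_filter.mpr ⟨Finset.mem_univ _, hj₀.symm⟩
  obtain ⟨j, hj, hpos⟩ := Finset.exists_mem_eq_sup _ ⟨j₀, hj₀'⟩ fun j : Fin m => (j : ℕ)
  exact ⟨j, (Finset.mem_filter.mp hj).2, hpos.symm⟩

noncomputable def leadingCoeffMatrix (V : Matrix (Fin m) (Fin m) F[X]) :
    Matrix (Fin m) (Fin m) F :=
  Matrix.of fun i j => (V i j).coeff (vecDegNat (V i))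

theorem WeakPopov.det_leadingCoeffMatrix_ne_zero {V : Matrix (Fin m) (Fin m) F[X]}
    (hV : WeakPopov V) (hrow : ∀ i, V i ≠ 0) : (leadingCoeffMatrix V).det ≠ 0 := by
  have hlead : ∀ i, ∃ j : Fin m, (V i j).degree = vecDeg (V i) ∧ (j : ℕ) = leadPos (V i) :=
    fun i => haveI : Nonempty (Fin m) := ⟨i⟩; exists_degree_eq_vecDeg_leadPos (V i)
  choose p hpdeg hppos using hlead
  refine Matrix.det_ne_zero_of_pivots _ p (fun a b hab => hV ?_)
    (fun i => (coeff_vecDegNat_ne_zero_iff (hrow i) _).mpr (hpdeg i)) fun i j hij => ?_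
  · simp only [← hppos, hab]
  · by_contra hc
    have hle := le_leadPos ((coeff_vecDegNat_ne_zero_iff (hrow i) j).mp hc)
    rw [← hppos] at hle
    exact hle.not_gt hij

end WeakPopov

theorem statement4_general {F : Type*} [Field F] {m : ℕ}
    (V : Matrix (Fin m) (Fin m) (Polynomial F))
    (hdet : V.det ≠ 0) (hV : WeakPopov V) :
    matDeg V = V.det.degree := by
  have hrow : ∀ i, V i ≠ 0 := fun i h => hdet (Matrix.det_eq_zero_of_row_eq_zero i (congrFun h))
  rw [Matrix.degree_det_eq_sum_of_natDegree_le V _ (fun i => natDegree_le_vecDegNat (V i))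
    (hV.det_leadingCoeffMatrix_ne_zero hrow), matDeg, Nat.cast_sum]
  exact Finset.sum_congr rfl fun i _ => vecDeg_eq_vecDegNat (hrow i)

/-- If a nonsingular square matrix V over F[X] is in weak Popov form, then
its orthogonality defect is zero: the sum of the degrees of its rows equals the degree
of its determinant. -/
theorem statement4 {F : Type*} [Field F] [Fintype F] {m : ℕ}
    (V : Matrix (Fin m) (Fin m) (Polynomial F))
    (hdet : V.det ≠ 0) (hV : WeakPopov V) :
    matDeg V = V.det.degree :=
  statement4_general V hdet hV
end

section
/- Suppose deg R ≥ k and let b be a nonzero row vector of length ℓ+1 over F_q[X]. Let b' = b·W_ℓ where W_ℓ = diag(1, X^{k−1}, …, X^{ℓ(k−1)}). Then the row degree of the length-(ℓ+2) vector (0 | b')·X^{k−1} − R·(b' | 0) equals deg R + deg b'. -/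
open Polynomial

open scoped Classical

/-! Multiplying by `R` adds `deg R` to every entry, so `R·(b' | 0)` has degree `deg R + deg b'`,
while `(0 | b')·X^{k-1}` has degree at most `deg b' + k - 1 < deg R + deg b'`; the subtraction
therefore leaves the entry of maximal degree of `R·(b' | 0)` untouched. -/

theorem Fin.cons_zero_apply_eq_dite {M : Type*} [Zero M] {m : ℕ} (v : Fin m → M)
    (j : Fin (m + 1)) :
    (Fin.cons 0 v : Fin (m + 1) → M) j = if hj : 1 ≤ (j : ℕ) then v ⟨j - 1, by omega⟩ else 0 := by
  cases j using Fin.cases <;> simp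

theorem Fin.snoc_zero_apply_eq_dite {M : Type*} [Zero M] {m : ℕ} (v : Fin m → M)
    (j : Fin (m + 1)) :
    (Fin.snoc v 0 : Fin (m + 1) → M) j = if hj : (j : ℕ) < m then v ⟨j, hj⟩ else 0 := by
  cases j using Fin.lastCases <;> simp

section VecDeg

variable {F : Type*} [Field F] {m : ℕ}

theorem vecDeg_eq_bot_iff {v : Fin m → F[X]} : vecDeg v = ⊥ ↔ v = 0 := by
  simp [vecDeg, Finset.sup_eq_bot_iff, funext_iff]

theorem vecDeg_mul_left (p : F[X]) (v : Fin m → F[X]) :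
    vecDeg (fun j => p * v j) = p.degree + vecDeg v := by
  simp only [vecDeg, degree_mul]
  exact Finset.apply_sup_eq_sup_comp_of_linearOrder (p.degree + ·)
    (fun _ _ h => add_le_add_right h _) (WithBot.add_bot _) |>.symm

theorem vecDeg_mul_right (v : Fin m → F[X]) (p : F[X]) :
    vecDeg (fun j => v j * p) = vecDeg v + p.degree := by
  simp only [mul_comm _ p, vecDeg_mul_left, add_comm]

theorem vecDeg_cons (a : F[X]) (v : Fin m → F[X]) :
    vecDeg (Fin.cons a v : Fin (m + 1) → F[X]) = a.degree ⊔ vecDeg v := by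
  simp [vecDeg, Fin.univ_succ, Function.comp_def]

theorem vecDeg_snoc (v : Fin m → F[X]) (a : F[X]) :
    vecDeg (Fin.snoc v a : Fin (m + 1) → F[X]) = vecDeg v ⊔ a.degree := by
  simp [vecDeg, Fin.univ_castSuccEmb, Function.comp_def, sup_comm]

theorem vecDeg_sub_of_lt {u w : Fin m → F[X]} (h : vecDeg u < vecDeg w) :
    vecDeg (fun j => u j - w j) = vecDeg w := by
  refine le_antisymm (Finset.sup_le fun j _ => (degree_sub_le _ _).trans
    (max_le ((degree_le_vecDeg u j).trans h.le) (degree_le_vecDeg w j))) ?_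
  obtain ⟨j₀, -⟩ := Function.ne_iff.1 (mt vecDeg_eq_bot_iff.2 (ne_bot_of_gt h))
  obtain ⟨j, -, hj⟩ := Finset.exists_mem_eq_sup _ ⟨j₀, Finset.mem_univ _⟩ fun j => (w j).degree
  calc vecDeg w = (w j).degree := hj
    _ = (u j - w j).degree := (degree_sub_eq_right_of_degree_lt
        ((degree_le_vecDeg u j).trans_lt (h.trans_eq hj))).symm
    _ ≤ vecDeg (fun j => u j - w j) := degree_le_vecDeg (fun j => u j - w j) j

theorem vecDeg_cons_mul_sub_mul_snoc {p R : F[X]} (hpR : p.degree < R.degree)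
    (v : Fin m → F[X]) :
    vecDeg (fun j => (Fin.cons 0 v : Fin (m + 1) → F[X]) j * p -
        R * (Fin.snoc v 0 : Fin (m + 1) → F[X]) j) =
      R.degree + vecDeg v := by
  rcases eq_or_ne v 0 with rfl | hv
  · rw [show (Fin.cons 0 0 : Fin (m + 1) → F[X]) = 0 from Matrix.cons_zero_zero]
    simp [vecDeg, Fin.snoc]
  have hR : vecDeg (fun j => R * (Fin.snoc v 0 : Fin (m + 1) → F[X]) j) =
      R.degree + vecDeg v := by
    rw [vecDeg_mul_left, vecDeg_snoc, degree_zero, sup_bot_eq]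
  rw [vecDeg_sub_of_lt, hR]
  rw [vecDeg_mul_right, vecDeg_cons, hR, degree_zero, bot_sup_eq, add_comm R.degree]
  exact WithBot.add_lt_add_left (mt vecDeg_eq_bot_iff.1 hv) hpR

end VecDeg

/-- If deg R ≥ k and b is a nonzero row vector of length ℓ+1 with
b' = b·W_ℓ, then the row degree of (0 | b')·X^{k−1} − R·(b' | 0) equals
deg R + deg b'. -/
theorem statement14 {F : Type*} [Field F] {k ℓ : ℕ} (hk : 1 ≤ k)
    (R : Polynomial F) (hRk : k ≤ R.natDegree)
    (b : Fin (ℓ + 1) → Polynomial F) :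
    vecDeg (fun j : Fin (ℓ + 2) =>
        (if hj : 1 ≤ (j : ℕ) then
            (b ⟨(j : ℕ) - 1, by have := j.isLt; omega⟩) *
              X ^ ((((j : ℕ) - 1)) * (k - 1))
          else 0) * X ^ (k - 1)
        - R * (if hj : (j : ℕ) < ℓ + 1 then
            (b ⟨(j : ℕ), hj⟩) * X ^ ((j : ℕ) * (k - 1)) else 0)) =
      R.degree + vecDeg (fun i : Fin (ℓ + 1) => b i * X ^ ((i : ℕ) * (k - 1))) := by
  have hR : R ≠ 0 := by
    rintro rfl
    rw [natDegree_zero] at hRk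
    omega
  have hXR : (X ^ (k - 1) : F[X]).degree < R.degree := by
    rw [degree_X_pow, degree_eq_natDegree hR]
    exact_mod_cast (by omega : k - 1 < R.natDegree)
  rw [← vecDeg_cons_mul_sub_mul_snoc hXR]
  simp only [Fin.cons_zero_apply_eq_dite, Fin.snoc_zero_apply_eq_dite]
end

section
/- Every bivariate polynomial Q(X,Y) vanishing to multiplicity at least 1 at the n points (α_i, r_i') and of Y-degree at most 1 is an F_q[X]-linear combination of G(X) and Y − R(X), where G(X) = ∏_i (X − α_i) and R is the Lagrange polynomial through the points. -/
/-!
Substituting `Y = R(X)` turns the hypothesis into `Q(α_i, R(α_i)) = 0`, i.e. `Q(X, R(X))` vanishes at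
every `α_i`, so it is a multiple of `G = ∏ i, (X - α_i)`. Since `Q` is affine in `Y`, Taylor
expansion at `Y = R(X)` gives `Q = Q(X, R(X)) + Q_1(X) (Y - R(X))`.
-/

open Polynomial

namespace Polynomial

theorem eval_eval_eq_eval_eval_C_eval {S : Type*} [CommSemiring S] (Q : S[X][X]) (P : S[X])
    (a : S) : (Q.eval P).eval a = (Q.eval (C (P.eval a))).eval a := by
  induction Q using Polynomial.induction_on with
  | C c => simp
  | add f g hf hg => simp only [eval_add, hf, hg]
  | monomial k c _ => simp

theorem eq_C_eval_add_C_coeff_one_mul_X_sub_C {S : Type*} [CommRing S] {Q : S[X]}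
    (hQ : Q.natDegree ≤ 1) (P : S) : Q = C (Q.eval P) + C (Q.coeff 1) * (X - C P) := by
  have hQ_affine := eq_X_add_C_of_natDegree_le_one hQ
  set a := Q.coeff 1
  rw [hQ_affine, eval_add, eval_mul, eval_C, eval_X, eval_C, map_add, map_mul]
  ring

theorem prod_X_sub_C_dvd_of_eval_eq_zero {K ι : Type*} [Field K] [Fintype ι] {α : ι → K}
    (hα : Function.Injective α) {f : K[X]} (hf : ∀ i, f.eval (α i) = 0) :
    ∏ i, (X - C (α i)) ∣ f :=
  Finset.prod_dvd_of_coprime (fun _ _ _ _ hij => pairwise_coprime_X_sub_C hα hij)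
    fun i _ => dvd_iff_isRoot.2 (hf i)

end Polynomial

theorem statement15_general {F : Type*} [Field F] {n : ℕ}
    (α : Fin n → F) (hα : Function.Injective α) (r' : Fin n → F)
    (R : Polynomial F) (hR : ∀ i, R.eval (α i) = r' i)
    (Q : Polynomial (Polynomial F)) (hQdeg : Q.natDegree ≤ 1)
    (hQ : ∀ i, (Q.eval (C (r' i))).eval (α i) = 0) :
    ∃ p q : Polynomial F,
      Q = C (p * ∏ i, (X - C (α i))) + C q * (X - C R) := by
  obtain ⟨p, hp⟩ : ∏ i, (X - C (α i)) ∣ Q.eval R :=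
    prod_X_sub_C_dvd_of_eval_eq_zero hα fun i => by
      rw [eval_eval_eq_eval_eval_C_eval, hR i, hQ i]
  refine ⟨p, Q.coeff 1, ?_⟩
  rw [mul_comm p, ← hp]
  exact eq_C_eval_add_C_coeff_one_mul_X_sub_C hQdeg R

/-- Every bivariate polynomial Q(X,Y) of Y-degree at most 1 vanishing at
the n points (α_i, r_i') is an F[X]-linear combination of G(X) = ∏_i (X − α_i) and
Y − R(X), where R is the Lagrange polynomial through the points. -/
theorem statement15 {F : Type*} [Field F] [Fintype F] {n : ℕ}
    (α : Fin n → F) (hα : Function.Injective α) (r' : Fin n → F)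
    (R : Polynomial F) (hRdeg : R.natDegree < n) (hR : ∀ i, R.eval (α i) = r' i)
    (Q : Polynomial (Polynomial F)) (hQdeg : Q.natDegree ≤ 1)
    (hQ : ∀ i, (Q.eval (C (r' i))).eval (α i) = 0) :
    ∃ p q : Polynomial F,
      Q = C (p * ∏ i, (X - C (α i))) + C q * (X - C R) :=
  statement15_general α hα r' R hR Q hQdeg hQ
end

section
/- Let Q(X,Y) be a nonzero polynomial of Y-degree at most ℓ that vanishes with multiplicity at least s at all n points (α_i, r_i/w_i), and has (1,k−1)-weighted degree less than s(n−τ). If c is a codeword of the generalized Reed–Solomon code with evaluation points α_i, column multipliers w_i, and dimension k, given by c_i = w_i f(α_i) for a polynomial f of degree < k, and the Hamming distance between c and r = (r_0,…,r_{n−1}) is at most τ, then (Y − f(X)) divides Q(X,Y). -/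
open Polynomial

open scoped Classical

/-- The (1, k−1)-weighted degree of a bivariate polynomial `Q : F[X][Y]`. -/
noncomputable def wdeg {F : Type*} [Field F] (k : ℕ) (Q : Polynomial (Polynomial F)) : ℕ :=
  Q.support.sup fun j => (Q.coeff j).natDegree + (k - 1) * j

/-!
Guruswami–Sudan: put g(X) = Q(X, f(X)). At each of the at least n − τ positions where the
codeword agrees with r, f passes through the point (α_i, r_i / w_i), where Q vanishes to
order s, so (X − α_i)^s divides g. Since deg f ≤ k − 1, deg g is at most the weighted degree
of Q, which is less than s(n − τ); hence g = 0, i.e. f is a root of Q as a polynomial in Y.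
-/

section

variable {F : Type*} [Field F]

theorem shiftXY_shiftXY_neg (Q : Polynomial (Polynomial F)) (a b : F) :
    shiftXY (shiftXY Q a b) (-a) (-b) = Q := by
  unfold shiftXY
  set φ := ((aeval (X + C a : Polynomial F)).toRingHom : Polynomial F →+* Polynomial F)
  set ψ := ((aeval (X + C (-a) : Polynomial F)).toRingHom : Polynomial F →+* Polynomial F)
  have hψφ : ψ.comp φ = RingHom.id (Polynomial F) := by
    apply Polynomial.ringHom_ext
    · intro c; simp [φ, ψ]
    · simp [φ, ψ]
  have hmap : (X + C (C b) : Polynomial (Polynomial F)).map ψ = X + C (C b) := by simp [ψ]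
  have hcomp : (X + C (C b) : Polynomial (Polynomial F)).comp (X + C (C (-b))) = X := by
    simp [add_comm]
  rw [Polynomial.map_comp, hmap, Polynomial.comp_assoc, Polynomial.map_map, hcomp, hψφ,
    Polynomial.map_id, Polynomial.comp_X]

theorem eval_shiftXY (Q : Polynomial (Polynomial F)) (a b : F) (c : Polynomial F) :
    (shiftXY Q a b).eval c =
      Q.eval₂ ((aeval (X + C a : Polynomial F)).toRingHom : Polynomial F →+* Polynomial F)
        (c + C b) := by
  simp [shiftXY, eval_comp, eval_map]

theorem eval_eq_eval₂_shiftXY (Q : Polynomial (Polynomial F)) (a b : F) (f : Polynomial F) :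
    Q.eval f = (shiftXY Q a b).eval₂
      ((aeval (X + C (-a) : Polynomial F)).toRingHom : Polynomial F →+* Polynomial F)
      (f + C (-b)) := by
  rw [← eval_shiftXY, shiftXY_shiftXY_neg]

theorem HasMultAt.pow_dvd_eval {Q : Polynomial (Polynomial F)} {a b : F} {s : ℕ}
    (hm : HasMultAt Q a b s) {f : Polynomial F} (hfa : f.eval a = b) :
    (X - C a) ^ s ∣ Q.eval f := by
  set ψ := ((aeval (X + C (-a) : Polynomial F)).toRingHom : Polynomial F →+* Polynomial F)
  have hroot : X - C a ∣ f + C (-b) := by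
    rw [C_neg, ← sub_eq_add_neg, dvd_iff_isRoot]
    simp [hfa]
  rw [eval_eq_eval₂_shiftXY Q a b, eval₂_eq_sum, Polynomial.sum]
  refine Finset.dvd_sum fun j _ => ?_
  rcases le_or_gt s j with hsj | hjs
  · exact ((pow_dvd_pow _ hsj).trans (pow_dvd_pow_of_dvd hroot j)).mul_left _
  have hcoeff : X ^ (s - j) ∣ (shiftXY Q a b).coeff j :=
    X_pow_dvd_iff.mpr fun i hi => hm i j (by omega)
  have hψ : (X - C a) ^ (s - j) ∣ ψ ((shiftXY Q a b).coeff j) := by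
    simpa [ψ, sub_eq_add_neg] using map_dvd ψ hcoeff
  rw [show s = (s - j) + j by omega, pow_add]
  exact mul_dvd_mul hψ (pow_dvd_pow_of_dvd hroot j)

theorem natDegree_eval_le_wdeg (k : ℕ) (Q : Polynomial (Polynomial F)) {f : Polynomial F}
    (hf : f.natDegree ≤ k - 1) : (Q.eval f).natDegree ≤ wdeg k Q := by
  rw [eval_eq_sum, Polynomial.sum]
  refine natDegree_sum_le_of_forall_le _ _ fun j hj => ?_
  have hpow : (f ^ j).natDegree ≤ (k - 1) * j :=
    natDegree_pow_le.trans (by rw [mul_comm]; exact Nat.mul_le_mul_right j hf)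
  calc (Q.coeff j * f ^ j).natDegree ≤ (Q.coeff j).natDegree + (f ^ j).natDegree :=
        natDegree_mul_le
    _ ≤ (Q.coeff j).natDegree + (k - 1) * j := by omega
    _ ≤ wdeg k Q := Finset.le_sup (f := fun j => (Q.coeff j).natDegree + (k - 1) * j) hj

theorem eq_zero_of_pow_dvd_of_natDegree_lt {ι : Type*} {E : Finset ι} {α : ι → F}
    (hα : Set.InjOn α E) {s : ℕ} {g : Polynomial F} (hdvd : ∀ i ∈ E, (X - C (α i)) ^ s ∣ g)
    (hdeg : g.natDegree < s * E.card) : g = 0 := by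
  have hprod : (∏ i ∈ E, (X - C (α i)) ^ s) ∣ g :=
    Finset.prod_dvd_of_coprime (fun i hi j hj hij =>
      (isCoprime_X_sub_C_of_isUnit_sub (sub_ne_zero_of_ne (hα.ne hi hj hij)).isUnit).pow) hdvd
  have hprod_deg : (∏ i ∈ E, (X - C (α i)) ^ s).natDegree = s * E.card := by
    rw [natDegree_prod_of_monic _ _ fun i _ => (monic_X_sub_C _).pow s]
    simp [mul_comm]
  by_contra hg
  exact absurd (natDegree_le_of_dvd hprod hg) (by omega)

end

theorem statement16_general {F : Type*} [Field F] {n k s τ : ℕ}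
    (α : Fin n → F) (hα : Function.Injective α)
    (w : Fin n → F) (hw : ∀ i, w i ≠ 0)
    (r : Fin n → F)
    (f : Polynomial F) (hf : f.natDegree < k)
    (hdist : (Finset.univ.filter fun i => w i * f.eval (α i) ≠ r i).card ≤ τ)
    (Q : Polynomial (Polynomial F))
    (hmult : ∀ i, HasMultAt Q (α i) (r i / w i) s)
    (hwdeg : wdeg k Q < s * (n - τ)) :
    (X - C f) ∣ Q := by
  set E := Finset.univ.filter fun i => w i * f.eval (α i) = r i
  have hagree : n - τ ≤ E.card := by
    have : E.card + (Finset.univ.filter fun i => w i * f.eval (α i) ≠ r i).card = n := by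
      simpa using Finset.card_filter_add_card_filter_not (s := Finset.univ)
        (fun i => w i * f.eval (α i) = r i)
    omega
  have hdvd : ∀ i ∈ E, (X - C (α i)) ^ s ∣ Q.eval f := fun i hi =>
    (hmult i).pow_dvd_eval <| (eq_div_iff (hw i)).mpr <| by
      rw [mul_comm]; exact (Finset.mem_filter.mp hi).2
  have hdeg : (Q.eval f).natDegree < s * E.card :=
    calc (Q.eval f).natDegree ≤ wdeg k Q := natDegree_eval_le_wdeg k Q (by omega)
      _ < s * (n - τ) := hwdeg
      _ ≤ s * E.card := Nat.mul_le_mul_left s hagree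
  rw [dvd_iff_isRoot]
  exact eq_zero_of_pow_dvd_of_natDegree_lt hα.injOn hdvd hdeg

/-- Guruswami–Sudan for GRS codes: If Q ≠ 0 has Y-degree ≤ ℓ, vanishes
with multiplicity ≥ s at all points (α_i, r_i/w_i), and has (1,k−1)-weighted degree
< s(n−τ), then for any codeword c_i = w_i f(α_i) (deg f < k) at Hamming distance ≤ τ
from r, we have (Y − f(X)) ∣ Q(X,Y). -/
theorem statement16 {F : Type*} [Field F] [Fintype F] {n k s ℓ τ : ℕ}
    (hk : 1 ≤ k) (hkn : k ≤ n) (hs : 1 ≤ s) (hℓ : 1 ≤ ℓ) (hτ : τ < n)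
    (hq : n < Fintype.card F)
    (α : Fin n → F) (hα : Function.Injective α) (hα0 : ∀ i, α i ≠ 0)
    (w : Fin n → F) (hw : ∀ i, w i ≠ 0)
    (r : Fin n → F)
    (f : Polynomial F) (hf : f.natDegree < k)
    (hdist : (Finset.univ.filter fun i => w i * f.eval (α i) ≠ r i).card ≤ τ)
    (Q : Polynomial (Polynomial F)) (hQ0 : Q ≠ 0) (hQℓ : Q.natDegree ≤ ℓ)
    (hmult : ∀ i, HasMultAt Q (α i) (r i / w i) s)
    (hwdeg : wdeg k Q < s * (n - τ)) :
    (X - C f) ∣ Q :=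
  statement16_general α hα w hw r f hf hdist Q hmult hwdeg
end

section
/- If E(s,ℓ,τ) = (ℓ+1)s(n−τ) − binom(ℓ+1,2)(k−1) − binom(s+1,2)n > 0, then there exists a nonzero bivariate polynomial Q(X,Y) over F_q of Y-degree at most ℓ, (1,k−1)-weighted degree less than s(n−τ), that vanishes with multiplicity at least s at each of the n points (α_i, r_i'). -/
/-!
Interpolation by linear algebra: a polynomial whose monomials `X^i Y^j` satisfy `j ≤ ℓ` and
`i + (k - 1) j < s(n - τ)` has at least `(ℓ + 1) s (n - τ) - C(ℓ + 1, 2)(k - 1)` free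
coefficients, while vanishing to order `s` at `n` points imposes `C(s + 1, 2) n` linear
conditions on them (the low-order coefficients of the shifted polynomials). When the first
number exceeds the second, the condition map has a nonzero kernel vector.
-/

open Polynomial

open Finset Module

section Shift

variable {F : Type*} [Field F]

lemma shiftXY_add (P Q : F[X][X]) (a b : F) :
    shiftXY (P + Q) a b = shiftXY P a b + shiftXY Q a b := by
  simp only [shiftXY, Polynomial.map_add, add_comp]

lemma shiftXY_smul (c : F) (Q : F[X][X]) (a b : F) :
    shiftXY (c • Q) a b = c • shiftXY Q a b := by
  simp [shiftXY, Algebra.smul_def, mul_comp]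

end Shift

section OfCoeffs

variable {F : Type*} [Field F] (T : Finset ((_ : ℕ) × ℕ))

/-- The polynomial `∑ v(j, i) X^i Y^j` over the exponent pairs `(j, i) ∈ T`. -/
noncomputable def ofCoeffs : (T → F) →ₗ[F] F[X][X] where
  toFun v := ∑ t : T, monomial t.1.1 (monomial t.1.2 (v t))
  map_add' v w := by simp only [Pi.add_apply, map_add, sum_add_distrib]
  map_smul' c v := by simp only [Pi.smul_apply, smul_sum, RingHom.id_apply, smul_monomial]

lemma coeff_coeff_ofCoeffs (v : T → F) (j i : ℕ) :
    ((ofCoeffs T v).coeff j).coeff i = if h : ⟨j, i⟩ ∈ T then v ⟨_, h⟩ else 0 := by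
  simp only [ofCoeffs, LinearMap.coe_mk, AddHom.coe_mk, finsetSum_coeff, coeff_monomial]
  have hterm (t : T) : ((if t.1.1 = j then monomial t.1.2 (v t) else 0).coeff i) =
      if t.1 = ⟨j, i⟩ then v t else 0 := by
    obtain ⟨⟨j', i'⟩, -⟩ := t
    by_cases hj : j' = j <;> by_cases hi : i' = i <;> simp [hj, hi, coeff_monomial]
  simp only [hterm]
  split_ifs with h
  · rw [Fintype.sum_eq_single ⟨_, h⟩ fun t ht => if_neg fun h' => ht (Subtype.ext h'),
      if_pos rfl]
  · refine Fintype.sum_eq_zero _ fun t => if_neg fun ht => h ?_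
    exact ht ▸ t.2

lemma coeff_coeff_ofCoeffs_of_notMem {v : T → F} {j i : ℕ} (h : ⟨j, i⟩ ∉ T) :
    ((ofCoeffs T v).coeff j).coeff i = 0 := by
  rw [coeff_coeff_ofCoeffs, dif_neg h]

lemma ofCoeffs_injective : Function.Injective (ofCoeffs (F := F) T) := by
  refine (injective_iff_map_eq_zero _).mpr fun v hv => funext fun t => ?_
  simpa [hv] using (coeff_coeff_ofCoeffs T v t.1.1 t.1.2).symm

lemma natDegree_ofCoeffs_le {ℓ : ℕ} (h : ∀ t ∈ T, t.1 ≤ ℓ) (v : T → F) :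
    (ofCoeffs T v).natDegree ≤ ℓ := by
  refine natDegree_le_iff_coeff_eq_zero.mpr fun j hj => Polynomial.ext fun i => ?_
  exact coeff_coeff_ofCoeffs_of_notMem T fun hmem => (h _ hmem).not_gt hj

lemma wdeg_ofCoeffs_lt {k N : ℕ} (hN : 0 < N) (h : ∀ t ∈ T, t.2 + (k - 1) * t.1 < N)
    (v : T → F) : wdeg k (ofCoeffs T v) < N := by
  refine (Finset.sup_lt_iff hN).mpr fun j hj => ?_
  by_contra! hle
  exact mem_support_iff.mp hj <| leadingCoeff_eq_zero.mp <|
    coeff_coeff_ofCoeffs_of_notMem T fun hmem => (h _ hmem).not_ge hle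

end OfCoeffs

section Multiplicity

variable {F ι : Type*} [Field F]

/-- The coefficients of `X^i Y^j`, `i + j < s`, of `Q(X + α p, Y + r p)` for all points `p`;
the pair `(i, j)` is indexed by `⟨i + j, (i, j)⟩`. -/
noncomputable def multConditions (α r : ι → F) (s : ℕ) :
    F[X][X] →ₗ[F] (ι × (range s).sigma antidiagonal → F) where
  toFun Q c := ((shiftXY Q (α c.1) (r c.1)).coeff c.2.1.2.2).coeff c.2.1.2.1
  map_add' P Q := by ext; simp [shiftXY_add]
  map_smul' c Q := by ext; simp [shiftXY_smul]

lemma hasMultAt_of_multConditions_eq_zero {α r : ι → F} {s : ℕ} {Q : F[X][X]}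
    (hQ : multConditions α r s Q = 0) (p : ι) : HasMultAt Q (α p) (r p) s := fun i j hij =>
  congrFun hQ (p, ⟨⟨i + j, (i, j)⟩, by simpa using hij⟩)

end Multiplicity

lemma card_sigma_antidiagonal (s : ℕ) :
    ((range s).sigma antidiagonal).card = (s + 1).choose 2 := by
  rw [card_sigma]
  simp only [Nat.card_antidiagonal]
  rw [Nat.choose_two_right, ← sum_range_id, sum_range_succ', add_zero]

/-- Exponent pairs `(j, i)` of the monomials `X^i Y^j` with `j ≤ ℓ` and `i + c j < N`. -/
def weightedBox (ℓ c N : ℕ) : Finset ((_ : ℕ) × ℕ) :=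
  (range (ℓ + 1)).sigma fun j => range (N - c * j)

lemma mem_weightedBox {ℓ c N : ℕ} {t : (_ : ℕ) × ℕ} :
    t ∈ weightedBox ℓ c N ↔ t.1 ≤ ℓ ∧ t.2 + c * t.1 < N := by
  simp only [weightedBox, mem_sigma, mem_range]
  omega

lemma le_card_weightedBox (ℓ c N : ℕ) :
    ((ℓ + 1) * N - (ℓ + 1).choose 2 * c : ℤ) ≤ (weightedBox ℓ c N).card := by
  have hsum : ∑ j ∈ range (ℓ + 1), (j : ℤ) = (ℓ + 1).choose 2 := by
    rw [Nat.choose_two_right, ← sum_range_id]; push_cast; rfl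
  calc ((ℓ + 1) * N - (ℓ + 1).choose 2 * c : ℤ)
      = ∑ j ∈ range (ℓ + 1), ((N : ℤ) - c * j) := by
        rw [sum_sub_distrib, sum_const, card_range, nsmul_eq_mul, ← mul_sum, hsum]
        push_cast; ring
    _ ≤ ∑ j ∈ range (ℓ + 1), ((N - c * j : ℕ) : ℤ) := sum_le_sum fun j _ => by omega
    _ = (weightedBox ℓ c N).card := by simp [weightedBox]

theorem statement17_general {F : Type*} [Field F] {n k s ℓ τ : ℕ}
    (hk : 1 ≤ k) (hs : 1 ≤ s) (hτ : τ < n)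
    (α : Fin n → F) (r' : Fin n → F)
    (hE : 0 < (ℓ + 1 : ℤ) * s * ((n : ℤ) - τ)
        - ((ℓ + 1).choose 2 : ℤ) * ((k : ℤ) - 1)
        - ((s + 1).choose 2 : ℤ) * n) :
    ∃ Q : Polynomial (Polynomial F), Q ≠ 0 ∧ Q.natDegree ≤ ℓ ∧
      wdeg k Q < s * (n - τ) ∧ ∀ i, HasMultAt Q (α i) (r' i) s := by
  set N := s * (n - τ) with hN
  set T := weightedBox ℓ (k - 1) N
  have hdim : finrank F (Fin n × (range s).sigma antidiagonal → F) < finrank F (T → F) := by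
    have hT := le_card_weightedBox ℓ (k - 1) N
    simp only [finrank_fintype_fun_eq_card, Fintype.card_prod, Fintype.card_fin,
      Fintype.card_coe, card_sigma_antidiagonal]
    push_cast [hN, Nat.cast_sub hk, Nat.cast_sub hτ.le] at hT ⊢
    linarith
  obtain ⟨v, hv, hv0⟩ := (Submodule.ne_bot_iff _).mp
    (LinearMap.ker_ne_bot_of_finrank_lt (f := (multConditions α r' s).comp (ofCoeffs T)) hdim)
  refine ⟨ofCoeffs T v, (map_ne_zero_iff _ (ofCoeffs_injective T)).mpr hv0,
    natDegree_ofCoeffs_le T (fun _ ht => (mem_weightedBox.mp ht).1) v,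
    wdeg_ofCoeffs_lt T (Nat.mul_pos hs (Nat.sub_pos_of_lt hτ))
      (fun _ ht => (mem_weightedBox.mp ht).2) v,
    hasMultAt_of_multConditions_eq_zero hv⟩

/-- If E(s,ℓ,τ) = (ℓ+1)s(n−τ) − C(ℓ+1,2)(k−1) − C(s+1,2)n > 0, then there
exists a nonzero Q(X,Y) of Y-degree ≤ ℓ and (1,k−1)-weighted degree < s(n−τ) vanishing
with multiplicity ≥ s at each of the n points (α_i, r_i'). -/
theorem statement17 {F : Type*} [Field F] [Fintype F] {n k s ℓ τ : ℕ}
    (hk : 1 ≤ k) (hkn : k ≤ n) (hs : 1 ≤ s) (hsℓ : s ≤ ℓ) (hτ : τ < n)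
    (α : Fin n → F) (hα : Function.Injective α) (r' : Fin n → F)
    (hE : 0 < (ℓ + 1 : ℤ) * s * ((n : ℤ) - τ)
        - ((ℓ + 1).choose 2 : ℤ) * ((k : ℤ) - 1)
        - ((s + 1).choose 2 : ℤ) * n) :
    ∃ Q : Polynomial (Polynomial F), Q ≠ 0 ∧ Q.natDegree ≤ ℓ ∧
      wdeg k Q < s * (n - τ) ∧ ∀ i, HasMultAt Q (α i) (r' i) s :=
  statement17_general hk hs hτ α r' hE
end
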